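/- Let v ∈ R^n, let k ≥ 1, and let H_k(v) denote a best k-sparse approximation of v (keeping the k largest-magnitude entries and zeroing the rest). Then for every k-sparse vector x ∈ R^n (i.e., ‖x‖₀ ≤ k), ‖x − H_k(v)‖₂ ≤ 2·‖x_Ω − v_Ω‖₂ ≤ 2‖x − v‖₂, where Ω is the union of the supports of x and H_k(v). In particular ‖x − H_k(v)‖₂ ≤ ‖x_Ω − v_Ω‖₂ + ‖H_k(v) − v_Ω‖₂ and ‖H_k(v) − v_Ω‖₂ ≤ ‖x_Ω − v_Ω‖₂. -/

import Mathlib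

/-!
Let `Ω` be the union of the supports of `x` and `H_k(v)`. Every `u` vanishing off `Ω`, in
particular `x` and `H_k(v)`, satisfies `‖v - u‖² = ‖u - v_Ω‖² + ‖v - v_Ω‖²`. Optimality of `H_k(v)`
against the `k`-sparse competitor `x` therefore gives `‖H_k(v) - v_Ω‖ ≤ ‖x - v_Ω‖`, and the
triangle inequality through `v_Ω` yields the factor `2`.
-/

open Classical

/-- Euclidean norm of a vector in `ℝⁿ`. -/
noncomputable def vnorm {n : ℕ} (v : Fin n → ℝ) : ℝ := Real.sqrt (∑ i, v i ^ 2)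

/-- Number of nonzero entries of a vector (the `ℓ₀` pseudo-norm). -/
noncomputable def sparsity {n : ℕ} (v : Fin n → ℝ) : ℕ :=
  (Finset.univ.filter fun i => v i ≠ 0).card

/-- Restriction of `v` to an index set, zeroing entries outside it. -/
noncomputable def restr {n : ℕ} (v : Fin n → ℝ) (S : Set (Fin n)) : Fin n → ℝ :=
  fun i => if i ∈ S then v i else 0

section

variable {n : ℕ}

lemma vnorm_eq_norm_toLp (v : Fin n → ℝ) : vnorm v = ‖WithLp.toLp 2 v‖ := by
  simp [vnorm, EuclideanSpace.norm_eq, Real.norm_eq_abs, sq_abs]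

lemma vnorm_nonneg (v : Fin n → ℝ) : 0 ≤ vnorm v := Real.sqrt_nonneg _

lemma vnorm_sq (v : Fin n → ℝ) : vnorm v ^ 2 = ∑ i, v i ^ 2 :=
  Real.sq_sqrt (Finset.sum_nonneg fun i _ => sq_nonneg (v i))

lemma vnorm_sub_le (a b : Fin n → ℝ) : vnorm (a - b) ≤ vnorm a + vnorm b := by
  simpa only [vnorm_eq_norm_toLp, WithLp.toLp_sub] using norm_sub_le _ _

lemma restr_eq_self {v : Fin n → ℝ} {S : Set (Fin n)} (hv : ∀ i ∉ S, v i = 0) :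
    restr v S = v := by
  funext i
  by_cases h : i ∈ S <;> simp [restr, h, hv]

lemma restr_sub (a b : Fin n → ℝ) (S : Set (Fin n)) :
    restr a S - restr b S = restr (a - b) S := by
  funext i
  by_cases h : i ∈ S <;> simp [restr, h]

lemma vnorm_restr_le (v : Fin n → ℝ) (S : Set (Fin n)) : vnorm (restr v S) ≤ vnorm v := by
  refine Real.sqrt_le_sqrt (Finset.sum_le_sum fun i _ => ?_)
  by_cases h : i ∈ S <;> simp [restr, h, sq_nonneg]

/-- Pythagoras: `v - u` splits into `v_S - u`, supported on `S`, and `v - v_S`, supported off `S`. -/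
lemma vnorm_sub_sq_of_support_subset {v u : Fin n → ℝ} {S : Set (Fin n)}
    (hu : ∀ i ∉ S, u i = 0) :
    vnorm (v - u) ^ 2 = vnorm (u - restr v S) ^ 2 + vnorm (v - restr v S) ^ 2 := by
  simp only [vnorm_sq, ← Finset.sum_add_distrib]
  refine Finset.sum_congr rfl fun i _ => ?_
  by_cases h : i ∈ S
  · simp only [restr, h, if_true, Pi.sub_apply, sub_self]
    ring
  · simp [restr, h, hu i h]

lemma vnorm_sub_restr_le_of_vnorm_sub_le {v u w : Fin n → ℝ} {S : Set (Fin n)}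
    (hu : ∀ i ∉ S, u i = 0) (hw : ∀ i ∉ S, w i = 0) (huw : vnorm (v - u) ≤ vnorm (v - w)) :
    vnorm (u - restr v S) ≤ vnorm (w - restr v S) := by
  have hsq := pow_le_pow_left₀ (vnorm_nonneg _) huw 2
  rw [vnorm_sub_sq_of_support_subset hu, vnorm_sub_sq_of_support_subset hw] at hsq
  exact (pow_le_pow_iff_left₀ (vnorm_nonneg _) (vnorm_nonneg _) two_ne_zero).mp (by linarith)

end

theorem stmt16_general (n k : ℕ) (v Hv x : Fin n → ℝ)
    (hHopt : ∀ u : Fin n → ℝ, sparsity u ≤ k → vnorm (v - Hv) ≤ vnorm (v - u))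
    (hxs : sparsity x ≤ k) :
    vnorm (x - Hv) ≤ 2 * vnorm (restr x {i | x i ≠ 0 ∨ Hv i ≠ 0} -
        restr v {i | x i ≠ 0 ∨ Hv i ≠ 0}) ∧
    2 * vnorm (restr x {i | x i ≠ 0 ∨ Hv i ≠ 0} - restr v {i | x i ≠ 0 ∨ Hv i ≠ 0}) ≤
        2 * vnorm (x - v) ∧
    vnorm (x - Hv) ≤ vnorm (restr x {i | x i ≠ 0 ∨ Hv i ≠ 0} -
        restr v {i | x i ≠ 0 ∨ Hv i ≠ 0}) +
      vnorm (Hv - restr v {i | x i ≠ 0 ∨ Hv i ≠ 0}) ∧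
    vnorm (Hv - restr v {i | x i ≠ 0 ∨ Hv i ≠ 0}) ≤
      vnorm (restr x {i | x i ≠ 0 ∨ Hv i ≠ 0} - restr v {i | x i ≠ 0 ∨ Hv i ≠ 0}) := by
  set Ω : Set (Fin n) := {i | x i ≠ 0 ∨ Hv i ≠ 0}
  have hxΩ : ∀ i ∉ Ω, x i = 0 := fun i hi => not_not.mp fun h => hi (Or.inl h)
  have hHΩ : ∀ i ∉ Ω, Hv i = 0 := fun i hi => not_not.mp fun h => hi (Or.inr h)
  rw [restr_eq_self hxΩ]
  have hbest : vnorm (Hv - restr v Ω) ≤ vnorm (x - restr v Ω) :=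
    vnorm_sub_restr_le_of_vnorm_sub_le hHΩ hxΩ (hHopt x hxs)
  have htri : vnorm (x - Hv) ≤ vnorm (x - restr v Ω) + vnorm (Hv - restr v Ω) := by
    simpa only [sub_sub_sub_cancel_right] using vnorm_sub_le (x - restr v Ω) (Hv - restr v Ω)
  have hrestr : vnorm (x - restr v Ω) ≤ vnorm (x - v) := by
    have h := vnorm_restr_le (x - v) Ω
    rwa [← restr_sub, restr_eq_self hxΩ] at h
  exact ⟨by linarith, by linarith, htri, hbest⟩

/-- if `Hv` is a best `k`-sparse approximation of `v` and `x` is any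
`k`-sparse vector, then with `Ω` the union of the supports of `x` and `Hv`,
`‖x − Hv‖ ≤ 2‖x_Ω − v_Ω‖ ≤ 2‖x − v‖`; moreover
`‖x − Hv‖ ≤ ‖x_Ω − v_Ω‖ + ‖Hv − v_Ω‖` and `‖Hv − v_Ω‖ ≤ ‖x_Ω − v_Ω‖`. -/
theorem stmt16 (n k : ℕ) (hk : 1 ≤ k) (v Hv x : Fin n → ℝ)
    (hHs : sparsity Hv ≤ k)
    (hHopt : ∀ u : Fin n → ℝ, sparsity u ≤ k → vnorm (v - Hv) ≤ vnorm (v - u))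
    (hxs : sparsity x ≤ k) :
    vnorm (x - Hv) ≤ 2 * vnorm (restr x {i | x i ≠ 0 ∨ Hv i ≠ 0} -
        restr v {i | x i ≠ 0 ∨ Hv i ≠ 0}) ∧
    2 * vnorm (restr x {i | x i ≠ 0 ∨ Hv i ≠ 0} - restr v {i | x i ≠ 0 ∨ Hv i ≠ 0}) ≤
        2 * vnorm (x - v) ∧
    vnorm (x - Hv) ≤ vnorm (restr x {i | x i ≠ 0 ∨ Hv i ≠ 0} -
        restr v {i | x i ≠ 0 ∨ Hv i ≠ 0}) +
      vnorm (Hv - restr v {i | x i ≠ 0 ∨ Hv i ≠ 0}) ∧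
    vnorm (Hv - restr v {i | x i ≠ 0 ∨ Hv i ≠ 0}) ≤
      vnorm (restr x {i | x i ≠ 0 ∨ Hv i ≠ 0} - restr v {i | x i ≠ 0 ∨ Hv i ≠ 0}) :=
  stmt16_general n k v Hv x hHopt hxs
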